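/- Let G be a finite abelian group and φ an automorphism with G = [G, φ]. Then |G| equals the cardinality of the minimal right Engel sink 𝓡(φ) of φ in G⟨φ⟩; in particular |G| ≤ |𝓡(φ)|. -/

import Mathlib

open scoped commutatorElement

/-- Iterated left Engel commutator `[x, _n h]`, with `[x, _0 h] = x`. -/
def lEngel {H : Type} [Group H] (h : H) : H → ℕ → H
  | x, 0 => x
  | x, n + 1 => ⁅lEngel h x n, h⁆

/-- Iterated right Engel commutator `[a, _n x]`, with `[a, _0 x] = a`. -/
def rEngel {H : Type} [Group H] (a : H) : H → ℕ → H
  | _, 0 => a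
  | x, n + 1 => ⁅rEngel a x n, x⁆

/-- A left Engel sink of `h`. -/
def IsLeftEngelSink {H : Type} [Group H] (h : H) (L : Set H) : Prop :=
  ∀ x : H, ∃ N : ℕ, ∀ n ≥ N, lEngel h x n ∈ L

/-- The minimal left Engel sink of `h`. -/
def IsMinLeftEngelSink {H : Type} [Group H] (h : H) (L : Set H) : Prop :=
  IsLeftEngelSink h L ∧ ∀ L' : Set H, IsLeftEngelSink h L' → L ⊆ L'

/-- A right Engel sink of `a`. -/
def IsRightEngelSink {H : Type} [Group H] (a : H) (R : Set H) : Prop :=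
  ∀ x : H, ∃ N : ℕ, ∀ n ≥ N, rEngel a x n ∈ R

/-- The minimal right Engel sink of `a`. -/
def IsMinRightEngelSink {H : Type} [Group H] (a : H) (R : Set H) : Prop :=
  IsRightEngelSink a R ∧ ∀ R' : Set H, IsRightEngelSink a R' → R ⊆ R'

/-! Since `H ⧸ G` is cyclic, every commutator `⁅φ, x⁆` lies in `G`, so `G` is a right Engel sink
of `φ` and `R ⊆ G`. Conversely, as `G` is abelian and normal, `F : g ↦ ⁅g, φ⁆` is an endomorphism
of `G`; its image generates `G`, so it is a permutation of the finite group `G`. Since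
`[φ, _n g⁻¹φ] = Fⁿ g` for `n ≥ 1`, every `g ∈ G` recurs infinitely often in a right Engel sequence
of `φ` and hence lies in every right Engel sink. So `R = G`. -/

open Filter Function

theorem Function.frequently_isPeriodicPt {α : Type*} {f : α → α} {x : α} (hx : x ∈ periodicPts f) :
    ∃ᶠ n in atTop, 0 < n ∧ IsPeriodicPt f n x := by
  obtain ⟨m, hm, hper⟩ := hx
  refine frequently_atTop.2 fun N ↦ ⟨m * (N + 1), ?_, by positivity, hper.mul_const _⟩
  nlinarith

section EngelSink

variable {H : Type} [Group H]

theorem IsRightEngelSink.mem_of_frequently {a x b : H} {R : Set H} (hR : IsRightEngelSink a R)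
    (h : ∃ᶠ n in atTop, rEngel a x n = b) : b ∈ R := by
  obtain ⟨N, hN⟩ := hR x
  obtain ⟨n, rfl, hn⟩ := (h.and_eventually (eventually_atTop.2 ⟨N, hN⟩)).exists
  exact hn

theorem commutatorElement_mem_of_sup_zpowers_eq_top {N : Subgroup H} [N.Normal] {a : H}
    (h : N ⊔ Subgroup.zpowers a = ⊤) (x : H) : ⁅a, x⁆ ∈ N := by
  have hx : QuotientGroup.mk' N x ∈ Subgroup.zpowers (QuotientGroup.mk' N a) := by
    rw [← MonoidHom.map_zpowers, ← bot_sup_eq (Subgroup.map _ _), ← QuotientGroup.map_mk'_self N,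
      ← Subgroup.map_sup, h]
    exact Subgroup.mem_map_of_mem _ trivial
  obtain ⟨k, hk⟩ := hx
  rw [← QuotientGroup.eq_one_iff, ← QuotientGroup.mk'_apply, map_commutatorElement, ← hk,
    commutatorElement_eq_one_iff_mul_comm]
  exact (Commute.refl _).zpow_right k

theorem commutatorElement_mem_of_mem_left {N : Subgroup H} [N.Normal] {u : H} (hu : u ∈ N) (x : H) :
    ⁅u, x⁆ ∈ N :=
  Subgroup.commutator_le_left N ⊤ (Subgroup.commutator_mem_commutator hu trivial)

theorem isRightEngelSink_of_commutatorElement_mem {N : Subgroup H} [N.Normal] {a : H}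
    (ha : ∀ x, ⁅a, x⁆ ∈ N) : IsRightEngelSink a N := by
  refine fun x ↦ ⟨1, fun n hn ↦ ?_⟩
  induction n, hn using Nat.le_induction with
  | base => exact ha x
  | succ n _ ih => exact commutatorElement_mem_of_mem_left ih x

end EngelSink

section AbelianNormalSubgroup

variable {H : Type} [Group H] {G : Subgroup H} [G.Normal]

theorem commutatorElement_mul_right_of_mem (hab : ∀ a ∈ G, ∀ b ∈ G, a * b = b * a) {u g : H}
    (hu : u ∈ G) (hg : g ∈ G) (x : H) : ⁅u, g * x⁆ = ⁅u, x⁆ := by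
  have hconj : x * u⁻¹ * x⁻¹ ∈ G := ‹G.Normal›.conj_mem _ (G.inv_mem hu) x
  calc ⁅u, g * x⁆ = u * (g * (x * u⁻¹ * x⁻¹)) * g⁻¹ := by
        simp only [commutatorElement_def]; group
    _ = u * ((x * u⁻¹ * x⁻¹) * g) * g⁻¹ := by rw [hab _ hg _ hconj]
    _ = ⁅u, x⁆ := by simp only [commutatorElement_def]; group

def commutatorRightHom (hab : ∀ a ∈ G, ∀ b ∈ G, a * b = b * a) (φ : H) : G →* G where
  toFun g := ⟨⁅(g : H), φ⁆, commutatorElement_mem_of_mem_left g.2 φ⟩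
  map_one' := by ext; simp
  map_mul' := by
    rintro ⟨s, hs⟩ ⟨t, ht⟩
    ext
    have hsφ := commutatorElement_mem_of_mem_left hs φ
    have htφ := commutatorElement_mem_of_mem_left ht φ
    calc ⁅s * t, φ⁆ = s * ⁅t, φ⁆ * s⁻¹ * ⁅s, φ⁆ := by simp only [commutatorElement_def]; group
      _ = ⁅t, φ⁆ * ⁅s, φ⁆ := by rw [hab _ hs _ htφ]; group
      _ = ⁅s, φ⁆ * ⁅t, φ⁆ := hab _ htφ _ hsφ

@[simp]
theorem coe_commutatorRightHom (hab : ∀ a ∈ G, ∀ b ∈ G, a * b = b * a) (φ : H) (g : G) :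
    (commutatorRightHom hab φ g : H) = ⁅(g : H), φ⁆ :=
  rfl

theorem commutatorRightHom_surjective (hab : ∀ a ∈ G, ∀ b ∈ G, a * b = b * a) {φ : H}
    (hcomm : Subgroup.closure {x : H | ∃ g ∈ G, x = ⁅g, φ⁆} = G) :
    Surjective (commutatorRightHom hab φ) := by
  have hle : G ≤ (commutatorRightHom hab φ).range.map G.subtype := by
    conv_lhs => rw [← hcomm]
    rw [Subgroup.closure_le]
    rintro _ ⟨g, hg, rfl⟩
    exact ⟨_, ⟨⟨g, hg⟩, rfl⟩, rfl⟩
  intro a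
  obtain ⟨_, ⟨g, rfl⟩, hga⟩ := hle a.2
  exact ⟨g, Subtype.ext hga⟩

theorem rEngel_inv_mul_eq_iterate (hab : ∀ a ∈ G, ∀ b ∈ G, a * b = b * a) (φ : H) (g : G)
    {n : ℕ} (hn : 0 < n) :
    rEngel φ ((g : H)⁻¹ * φ) n = ((commutatorRightHom hab φ)^[n] g : H) := by
  induction n, hn using Nat.le_induction with
  | base =>
    calc ⁅φ, (g : H)⁻¹ * φ⁆ = ⁅(g : H)⁻¹, φ⁆⁻¹ := by simp only [commutatorElement_def]; group
      _ = commutatorRightHom hab φ g := by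
        rw [← Subgroup.coe_inv, ← coe_commutatorRightHom, map_inv, Subgroup.coe_inv, inv_inv]
  | succ n _ ih =>
    rw [iterate_succ_apply', rEngel, ih, coe_commutatorRightHom,
      commutatorElement_mul_right_of_mem hab (Subtype.property _) (G.inv_mem g.2)]

end AbelianNormalSubgroup

theorem stmt14 (H : Type) [Group H] [Finite H] (G : Subgroup H) [G.Normal] (φ : H)
    (hab : ∀ a ∈ G, ∀ b ∈ G, a * b = b * a)
    (hgen : G ⊔ Subgroup.zpowers φ = ⊤)
    (hcomm : Subgroup.closure {x : H | ∃ g ∈ G, x = ⁅g, φ⁆} = G)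
    (R : Set H) (hR : IsMinRightEngelSink φ R) :
    Nat.card G = Nat.card R := by
  have hRG : R ⊆ G := hR.2 _ <| isRightEngelSink_of_commutatorElement_mem <|
    commutatorElement_mem_of_sup_zpowers_eq_top hgen
  have hinj : Injective (commutatorRightHom hab φ) :=
    Finite.injective_iff_surjective.2 (commutatorRightHom_surjective hab hcomm)
  have hGR : (G : Set H) ⊆ R := fun a ha ↦ hR.1.mem_of_frequently (x := a⁻¹ * φ) <|
    (frequently_isPeriodicPt (hinj.mem_periodicPts ⟨a, ha⟩)).mono fun n ⟨hn, hper⟩ ↦ by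
      rw [rEngel_inv_mul_eq_iterate hab φ ⟨a, ha⟩ hn, hper.eq]
  rw [hRG.antisymm hGR]
  rfl
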